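/- arXiv:1907.07544 — 5 statements merged into one kernel-verified Lean document; each statement's English description precedes it below -/
import Mathlib

section
/- Let A₃ be a q×p real matrix and A₄ a q×q real matrix with A₄A₄ᵀ − A₃A₃ᵀ = I. Then A₄ is invertible, every eigenvalue λ of A₄ᵀA₄ satisfies λ ≥ 1, and the nonzero eigenvalues of A₃ᵀA₃ are exactly the numbers λ − 1 where λ ranges over eigenvalues of A₄ᵀA₄ with λ > 1 (with matching multiplicities). -/
open Matrix

section Helpers

variable {m n : ℕ}

private lemma mem_eig_iff (M : Matrix (Fin n) (Fin n) ℝ) (μ : ℝ) (v : Fin n → ℝ) :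
    v ∈ Module.End.eigenspace (Matrix.toLin' M) μ ↔ M *ᵥ v = μ • v := by
  rw [Module.End.mem_eigenspace_iff, Matrix.toLin'_apply]

private lemma eig_finrank_le (A : Matrix (Fin m) (Fin n) ℝ) (B : Matrix (Fin n) (Fin m) ℝ)
    (μ : ℝ) (hμ : μ ≠ 0) :
    Module.finrank ℝ (Module.End.eigenspace (Matrix.toLin' (A * B)) μ) ≤
      Module.finrank ℝ (Module.End.eigenspace (Matrix.toLin' (B * A)) μ) := by
  have hmap : ∀ v ∈ Module.End.eigenspace (Matrix.toLin' (A * B)) μ,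
      Matrix.toLin' B v ∈ Module.End.eigenspace (Matrix.toLin' (B * A)) μ := by
    intro v hv
    rw [mem_eig_iff] at hv ⊢
    have key : (B * A) *ᵥ (B *ᵥ v) = B *ᵥ ((A * B) *ᵥ v) := by
      rw [Matrix.mulVec_mulVec, Matrix.mulVec_mulVec, Matrix.mul_assoc]
    rw [Matrix.toLin'_apply, key, hv, Matrix.mulVec_smul]
  refine LinearMap.finrank_le_finrank_of_injective
    (f := (Matrix.toLin' B).restrict hmap) ?_
  rw [← LinearMap.ker_eq_bot, LinearMap.ker_eq_bot']
  rintro ⟨v, hv⟩ hzero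
  have hB : B *ᵥ v = 0 := by
    have := congrArg Subtype.val hzero
    simpa [LinearMap.restrict_apply, Matrix.toLin'_apply] using this
  rw [mem_eig_iff] at hv
  have : μ • v = 0 := by
    rw [← hv, ← Matrix.mulVec_mulVec, hB, Matrix.mulVec_zero]
  exact Subtype.ext ((smul_eq_zero.mp this).resolve_left hμ)

private lemma eig_finrank_eq (A : Matrix (Fin m) (Fin n) ℝ) (B : Matrix (Fin n) (Fin m) ℝ)
    (μ : ℝ) (hμ : μ ≠ 0) :
    Module.finrank ℝ (Module.End.eigenspace (Matrix.toLin' (A * B)) μ) =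
      Module.finrank ℝ (Module.End.eigenspace (Matrix.toLin' (B * A)) μ) :=
  le_antisymm (eig_finrank_le A B μ hμ) (eig_finrank_le B A μ hμ)

private lemma eig_shift (M : Matrix (Fin n) (Fin n) ℝ) (μ : ℝ) :
    Module.End.eigenspace (Matrix.toLin' (1 + M)) μ =
      Module.End.eigenspace (Matrix.toLin' M) (μ - 1) := by
  ext v
  rw [mem_eig_iff, mem_eig_iff, Matrix.add_mulVec, Matrix.one_mulVec, sub_smul, one_smul,
    eq_sub_iff_add_eq, add_comm (M *ᵥ v) v]

/-- eigenspaces of `Mᵀ * M` at negative values are trivial. -/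
private lemma eig_neg_bot (M : Matrix (Fin m) (Fin n) ℝ) (μ : ℝ) (hμ : μ < 0) :
    Module.End.eigenspace (Matrix.toLin' (Mᵀ * M)) μ = ⊥ := by
  rw [Submodule.eq_bot_iff]
  intro v hv
  rw [mem_eig_iff] at hv
  by_contra hne
  have hpos : 0 < v ⬝ᵥ v :=
    lt_of_le_of_ne (Finset.sum_nonneg fun i _ => mul_self_nonneg _)
      (fun hc => hne (dotProduct_self_eq_zero.mp hc.symm))
  have hcalc : v ⬝ᵥ ((Mᵀ * M) *ᵥ v) = (M *ᵥ v) ⬝ᵥ (M *ᵥ v) := by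
    rw [← Matrix.mulVec_mulVec, Matrix.dotProduct_mulVec, Matrix.vecMul_transpose]
  have hnn : 0 ≤ v ⬝ᵥ ((Mᵀ * M) *ᵥ v) := by
    rw [hcalc]; exact Finset.sum_nonneg fun i _ => mul_self_nonneg _
  rw [hv, dotProduct_smul, smul_eq_mul] at hnn
  nlinarith

end Helpers

/-- If `A₄A₄ᵀ - A₃A₃ᵀ = I` then `A₄` is invertible, every eigenvalue `λ` of
`A₄ᵀA₄` satisfies `λ ≥ 1`, and the nonzero eigenvalues of `A₃ᵀA₃` are exactly the numbers
`λ - 1` for eigenvalues `λ > 1` of `A₄ᵀA₄`, with matching multiplicities. -/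
theorem stmt_5 (p q : ℕ)
    (A₃ : Matrix (Fin q) (Fin p) ℝ) (A₄ : Matrix (Fin q) (Fin q) ℝ)
    (h : A₄ * A₄ᵀ - A₃ * A₃ᵀ = 1) :
    IsUnit A₄ ∧
    (∀ lam : ℝ, Module.End.HasEigenvalue (Matrix.toLin' (A₄ᵀ * A₄)) lam → 1 ≤ lam) ∧
    (∀ lam : ℝ, lam ≠ 0 →
      ((Module.End.HasEigenvalue (Matrix.toLin' (A₃ᵀ * A₃)) lam ↔
        (Module.End.HasEigenvalue (Matrix.toLin' (A₄ᵀ * A₄)) (lam + 1) ∧ 1 < lam + 1)) ∧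
      Module.finrank ℝ (Module.End.eigenspace (Matrix.toLin' (A₃ᵀ * A₃)) lam) =
        Module.finrank ℝ (Module.End.eigenspace (Matrix.toLin' (A₄ᵀ * A₄)) (lam + 1)))) := by
  have hA : A₄ * A₄ᵀ = 1 + A₃ * A₃ᵀ := sub_eq_iff_eq_add.mp h
  -- A₄ is invertible
  have hdet : (A₄ * A₄ᵀ).det ≠ 0 := by
    intro hd
    obtain ⟨v, hv, hzero⟩ := Matrix.exists_mulVec_eq_zero_iff.mpr hd
    have h1 : v ⬝ᵥ ((A₄ * A₄ᵀ) *ᵥ v) = 0 := by rw [hzero, dotProduct_zero]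
    have h2 : v ⬝ᵥ ((A₄ * A₄ᵀ) *ᵥ v)
        = v ⬝ᵥ v + (A₃ᵀ *ᵥ v) ⬝ᵥ (A₃ᵀ *ᵥ v) := by
      rw [hA, Matrix.add_mulVec, Matrix.one_mulVec, dotProduct_add, ← Matrix.mulVec_mulVec,
        Matrix.dotProduct_mulVec, Matrix.mulVec_transpose]
    have h3 : 0 < v ⬝ᵥ v :=
      lt_of_le_of_ne (Finset.sum_nonneg fun i _ => mul_self_nonneg _)
        (fun hc => hv (dotProduct_self_eq_zero.mp hc.symm))
    have h4 : 0 ≤ (A₃ᵀ *ᵥ v) ⬝ᵥ (A₃ᵀ *ᵥ v) := Finset.sum_nonneg fun i _ => mul_self_nonneg _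
    rw [h2] at h1
    linarith
  rw [Matrix.det_mul, Matrix.det_transpose] at hdet
  have hdA : A₄.det ≠ 0 := fun hc => hdet (by rw [hc, zero_mul])
  have hunit : IsUnit A₄ := (Matrix.isUnit_iff_isUnit_det A₄).mpr (isUnit_iff_ne_zero.mpr hdA)
  -- eigenspace of A₄ᵀA₄ at 0 is trivial
  have hker : Module.End.eigenspace (Matrix.toLin' (A₄ᵀ * A₄)) 0 = ⊥ := by
    rw [Submodule.eq_bot_iff]
    intro v hv
    rw [mem_eig_iff, zero_smul] at hv
    have hinv : (A₄ᵀ * A₄)⁻¹ * (A₄ᵀ * A₄) = 1 := by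
      apply Matrix.nonsing_inv_mul
      rw [Matrix.det_mul, Matrix.det_transpose]
      exact isUnit_iff_ne_zero.mpr (mul_ne_zero hdA hdA)
    calc v = ((A₄ᵀ * A₄)⁻¹ * (A₄ᵀ * A₄)) *ᵥ v := by rw [hinv, Matrix.one_mulVec]
    _ = (A₄ᵀ * A₄)⁻¹ *ᵥ ((A₄ᵀ * A₄) *ᵥ v) := by rw [Matrix.mulVec_mulVec]
    _ = 0 := by rw [hv, Matrix.mulVec_zero]
  -- key dimension identity for μ ≠ 0
  have hdim : ∀ μ : ℝ, μ ≠ 0 →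
      Module.finrank ℝ (Module.End.eigenspace (Matrix.toLin' (A₃ᵀ * A₃)) μ) =
        Module.finrank ℝ (Module.End.eigenspace (Matrix.toLin' (A₄ᵀ * A₄)) (μ + 1)) := by
    intro μ hμ
    by_cases hμ1 : μ + 1 = 0
    · have hL : Module.End.eigenspace (Matrix.toLin' (A₃ᵀ * A₃)) μ = ⊥ :=
        eig_neg_bot A₃ μ (by linarith)
      have hR : Module.End.eigenspace (Matrix.toLin' (A₄ᵀ * A₄)) (μ + 1) = ⊥ := by
        rw [hμ1]; exact hker
      rw [hL, hR, finrank_bot, finrank_bot]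
    · calc Module.finrank ℝ (Module.End.eigenspace (Matrix.toLin' (A₃ᵀ * A₃)) μ)
          = Module.finrank ℝ (Module.End.eigenspace (Matrix.toLin' (A₃ * A₃ᵀ)) μ) :=
            eig_finrank_eq A₃ᵀ A₃ μ hμ
      _ = Module.finrank ℝ (Module.End.eigenspace (Matrix.toLin' (A₄ * A₄ᵀ)) (μ + 1)) := by
            rw [hA, eig_shift, add_sub_cancel_right]
      _ = Module.finrank ℝ (Module.End.eigenspace (Matrix.toLin' (A₄ᵀ * A₄)) (μ + 1)) :=
            eig_finrank_eq A₄ A₄ᵀ (μ + 1) hμ1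
  have hbot_iff : ∀ (k : ℕ) (S : Submodule ℝ (Fin k → ℝ)), S ≠ ⊥ ↔ 0 < Module.finrank ℝ S := by
    intro k S
    constructor
    · intro hS
      have := (Submodule.finrank_eq_zero (S := S)).not.mpr hS
      omega
    · intro hpos hS
      rw [hS, finrank_bot] at hpos
      omega
  refine ⟨hunit, ?_, ?_⟩
  · intro lam hlam
    rw [Module.End.hasEigenvalue_iff] at hlam
    by_contra hlt
    push_neg at hlt
    rcases eq_or_ne lam 0 with rfl | hne
    · exact hlam hker
    · have h0 := hdim (lam - 1) (by intro hc; apply hne; linarith)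
      rw [sub_add_cancel] at h0
      have hL : Module.End.eigenspace (Matrix.toLin' (A₃ᵀ * A₃)) (lam - 1) = ⊥ :=
        eig_neg_bot A₃ (lam - 1) (by linarith)
      rw [hL, finrank_bot] at h0
      have hnot : ¬ (Module.End.eigenspace (Matrix.toLin' (A₄ᵀ * A₄)) lam ≠ ⊥) := by
        rw [hbot_iff]
        omega
      exact hlam (not_not.mp hnot)
  · intro lam hlam
    refine ⟨?_, hdim lam hlam⟩
    rw [Module.End.hasEigenvalue_iff, Module.End.hasEigenvalue_iff, hbot_iff, hbot_iff,
      ← hdim lam hlam]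
    constructor
    · intro hpos
      refine ⟨hpos, ?_⟩
      by_contra hle
      push_neg at hle
      have hL : Module.End.eigenspace (Matrix.toLin' (A₃ᵀ * A₃)) lam = ⊥ :=
        eig_neg_bot A₃ lam (lt_of_le_of_ne (by linarith) hlam)
      rw [hL, finrank_bot] at hpos
      omega
    · exact fun ⟨h1, _⟩ => h1
end

section
/- Let A₃ (q×p) and A₄ (q×q) be real matrices with A₄A₄ᵀ − A₃A₃ᵀ = I. Then for all unit vectors y' ∈ ℝ^p and y'' ∈ ℝ^q, |A₃y' + A₄y''|² ≥ 1/(4 · tr(A₄ᵀA₄)). -/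
set_option maxHeartbeats 1000000

open Matrix

private lemma aux_dot (m q : ℕ) (B : Matrix (Fin q) (Fin m) ℝ) (z : Fin q → ℝ)
    (v : Fin m → ℝ) : (Bᵀ.mulVec z) ⬝ᵥ v = z ⬝ᵥ B.mulVec v := by
  rw [Matrix.mulVec_transpose, ← Matrix.dotProduct_mulVec]

/-- If `A₄A₄ᵀ - A₃A₃ᵀ = I`, then for all unit vectors `y' ∈ ℝ^p`, `y'' ∈ ℝ^q`,
`|A₃y' + A₄y''|² ≥ 1/(4·tr(A₄ᵀA₄))`. -/
theorem stmt_8 (p q : ℕ)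
    (A₃ : Matrix (Fin q) (Fin p) ℝ) (A₄ : Matrix (Fin q) (Fin q) ℝ)
    (h : A₄ * A₄ᵀ - A₃ * A₃ᵀ = 1)
    (y' : Fin p → ℝ) (y'' : Fin q → ℝ)
    (hy' : ∑ i, y' i ^ 2 = 1) (hy'' : ∑ i, y'' i ^ 2 = 1) :
    ∑ i, (A₃.mulVec y' + A₄.mulVec y'') i ^ 2 ≥ 1 / (4 * (A₄ᵀ * A₄).trace) := by
  have hAAT : A₄ * A₄ᵀ = 1 + A₃ * A₃ᵀ := by
    rw [← h]; abel
  -- A₄ᵀ is invertible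
  have hps : (A₃ * A₃ᵀ).PosSemidef := by
    have h1 := Matrix.posSemidef_self_mul_conjTranspose A₃
    rwa [Matrix.conjTranspose_eq_transpose_of_trivial] at h1
  have hpd : (A₄ * A₄ᵀ).PosDef := by
    rw [hAAT]; exact Matrix.PosDef.add_posSemidef Matrix.PosDef.one hps
  have hdet : IsUnit (A₄ᵀ).det := by
    have h1 : (0:ℝ) < (A₄ * A₄ᵀ).det := hpd.det_pos
    rw [Matrix.det_mul, Matrix.det_transpose] at h1
    rw [Matrix.det_transpose]
    exact isUnit_iff_ne_zero.mpr (by nlinarith)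
  set z := (A₄ᵀ)⁻¹.mulVec y'' with hzdef
  have hz : A₄ᵀ.mulVec z = y'' := by
    rw [hzdef, Matrix.mulVec_mulVec, Matrix.mul_nonsing_inv _ hdet, Matrix.one_mulVec]
  set u := A₃ᵀ.mulVec z with hudef
  set w := A₃.mulVec y' + A₄.mulVec y'' with hwdef
  set T := (A₄ᵀ * A₄).trace with hTdef
  set t := z ⬝ᵥ z with htdef
  set W := ∑ i, w i ^ 2 with hWdef
  have hy''dot : y'' ⬝ᵥ y'' = 1 := by
    rw [← hy'']; simp [dotProduct, sq]
  -- |A₄ᵀ z|² = z ⬝ (A₄A₄ᵀ) z   and equals 1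
  have h4 : z ⬝ᵥ (A₄ * A₄ᵀ).mulVec z = 1 := by
    rw [← Matrix.mulVec_mulVec, ← aux_dot q q A₄ z (A₄ᵀ.mulVec z), hz, hy''dot]
  -- |u|² = 1 - t
  have hu2 : u ⬝ᵥ u = 1 - t := by
    rw [hudef, aux_dot p q A₃ z (A₃ᵀ.mulVec z), Matrix.mulVec_mulVec]
    have h3 : (A₃ * A₃ᵀ) = A₄ * A₄ᵀ - 1 := by rw [hAAT]; abel
    rw [h3, Matrix.sub_mulVec, dotProduct_sub, h4, Matrix.one_mulVec]
  set a := u ⬝ᵥ y' with hadef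
  have ha2 : a ^ 2 ≤ 1 - t := by
    have hcs := Finset.sum_mul_sq_le_sq_mul_sq Finset.univ u y'
    have e1 : a = ∑ i, u i * y' i := rfl
    have e2 : u ⬝ᵥ u = ∑ i, u i ^ 2 := by simp [dotProduct, sq]
    rw [e1]
    calc (∑ i, u i * y' i) ^ 2 ≤ (∑ i, u i ^ 2) * ∑ i, y' i ^ 2 := hcs
      _ = 1 - t := by rw [hy', ← e2, hu2, mul_one]
  have hzw : z ⬝ᵥ w = a + 1 := by
    rw [hwdef, dotProduct_add, ← aux_dot p q A₃ z y', ← aux_dot q q A₄ z y'', hz,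
      hy''dot, hadef, hudef]
  have hcs2 : (a + 1) ^ 2 ≤ t * W := by
    rw [← hzw]
    have hcs := Finset.sum_mul_sq_le_sq_mul_sq Finset.univ z w
    have e1 : z ⬝ᵥ w = ∑ i, z i * w i := rfl
    have e2 : t = ∑ i, z i ^ 2 := by simp [htdef, dotProduct, sq]
    rw [e1, e2, hWdef]; exact hcs
  -- 1 ≤ T * t via row-wise Cauchy-Schwarz
  have hTt : 1 ≤ T * t := by
    have h1 : (1:ℝ) = ∑ i, (A₄ᵀ.mulVec z i) ^ 2 := by
      have : (A₄ᵀ.mulVec z) ⬝ᵥ (A₄ᵀ.mulVec z) = 1 := by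
        rw [aux_dot q q A₄ z (A₄ᵀ.mulVec z), Matrix.mulVec_mulVec, h4]
      rw [← this]; simp [dotProduct, sq]
    have h2 : ∀ i, (A₄ᵀ.mulVec z i) ^ 2 ≤ (∑ j, (A₄ᵀ i j) ^ 2) * t := by
      intro i
      have e2 : t = ∑ j, z j ^ 2 := by simp [htdef, dotProduct, sq]
      have : A₄ᵀ.mulVec z i = ∑ j, A₄ᵀ i j * z j := rfl
      rw [this, e2]
      exact Finset.sum_mul_sq_le_sq_mul_sq Finset.univ _ _
    have h3 : T = ∑ i, ∑ j, (A₄ᵀ i j) ^ 2 := by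
      simp [hTdef, Matrix.trace, Matrix.mul_apply, Matrix.diag, sq]
    calc (1:ℝ) = ∑ i, (A₄ᵀ.mulVec z i) ^ 2 := h1
      _ ≤ ∑ i, (∑ j, (A₄ᵀ i j) ^ 2) * t := Finset.sum_le_sum fun i _ => h2 i
      _ = T * t := by rw [← Finset.sum_mul, h3]
  have ht0 : 0 ≤ t := by
    have e2 : t = ∑ j, z j ^ 2 := by simp [htdef, dotProduct, sq]
    rw [e2]; positivity
  have hW0 : 0 ≤ W := by rw [hWdef]; positivity
  have hT0 : 0 ≤ T := by
    have h3 : T = ∑ i, ∑ j, (A₄ᵀ i j) ^ 2 := by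
      simp [hTdef, Matrix.trace, Matrix.mul_apply, Matrix.diag, sq]
    rw [h3]; positivity
  have htpos : 0 < t := by nlinarith
  have hTpos : 0 < T := by nlinarith
  have hle1 : t ≤ 1 := by nlinarith [sq_nonneg a]
  have h1 : t / 2 ≤ a + 1 := by nlinarith [ha2, sq_nonneg (a + 1 - t / 2), sq_nonneg (2 - t)]
  rw [ge_iff_le, div_le_iff₀ (by positivity)]
  -- (a+1)² ≥ t²/4, so t*W ≥ t²/4, so W ≥ t/4, and T*t ≥ 1
  have hq : t ^ 2 / 4 ≤ t * W := le_trans (by nlinarith) hcs2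
  have hW : t / 4 ≤ W := le_of_mul_le_mul_right (by nlinarith) htpos
  nlinarith [mul_le_mul_of_nonneg_left (show t ≤ 4 * W by linarith) hT0]
end

section
/- Let F(x) be given on the hyperboloid by |F(Φ(y,y',t))| ≤ C |A₃ x' + A₄ x''|^{−a} for a constant matrix pair satisfying A₄A₄ᵀ − A₃A₃ᵀ = I and a > 0, where (x',x'') = (y sinh t, y' cosh t). Then there is a constant C' (depending on C, a, and tr(A₄ᵀA₄)) with |F(Φ(y,y',t))| ≤ C' e^{−at} for all t ≥ 1 and all unit y, y'. -/
set_option maxHeartbeats 1000000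

open Matrix

/-- If `|F(Φ(y,y',t))| ≤ C |A₃x' + A₄x''|^{-a}` with
`(x',x'') = (y sinh t, y' cosh t)`, `A₄A₄ᵀ - A₃A₃ᵀ = I` and `a > 0`, then there is `C'`
with `|F(Φ(y,y',t))| ≤ C' e^{-at}` for all `t ≥ 1` and unit `y`, `y'`. -/
theorem stmt_12 (p q : ℕ)
    (A₃ : Matrix (Fin q) (Fin p) ℝ) (A₄ : Matrix (Fin q) (Fin q) ℝ)
    (h : A₄ * A₄ᵀ - A₃ * A₃ᵀ = 1)
    (a C : ℝ) (ha : 0 < a)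
    (F : (Fin p → ℝ) → (Fin q → ℝ) → ℝ → ℝ)
    (hF : ∀ (y : Fin p → ℝ) (y' : Fin q → ℝ) (t : ℝ),
      ∑ i, y i ^ 2 = 1 → ∑ i, y' i ^ 2 = 1 →
      |F y y' t| ≤ C *
        Real.sqrt (∑ i,
          (A₃.mulVec (Real.sinh t • y) + A₄.mulVec (Real.cosh t • y')) i ^ 2) ^ (-a)) :
    ∃ C' : ℝ, ∀ (y : Fin p → ℝ) (y' : Fin q → ℝ) (t : ℝ),
      ∑ i, y i ^ 2 = 1 → ∑ i, y' i ^ 2 = 1 → 1 ≤ t →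
      |F y y' t| ≤ C' * Real.exp (-a * t) := by
  have dpnn : ∀ {m : ℕ} (w : Fin m → ℝ), 0 ≤ w ⬝ᵥ w := fun w =>
    Finset.sum_nonneg fun i _ => mul_self_nonneg _
  have h' : A₄ * A₄ᵀ = 1 + A₃ * A₃ᵀ := sub_eq_iff_eq_add.mp h
  -- key quadratic identity
  have gram : ∀ {m : ℕ} (M : Matrix (Fin q) (Fin m) ℝ) (z : Fin q → ℝ),
      (Mᵀ *ᵥ z) ⬝ᵥ (Mᵀ *ᵥ z) = z ⬝ᵥ ((M * Mᵀ) *ᵥ z) := by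
    intro m M z
    have e : z ⬝ᵥ (M *ᵥ (Mᵀ *ᵥ z)) = (z ᵥ* M) ⬝ᵥ (Mᵀ *ᵥ z) :=
      dotProduct_mulVec _ _ _
    rw [← mulVec_mulVec, e, ← mulVec_transpose M z]
  have key : ∀ z : Fin q → ℝ, (A₄ᵀ *ᵥ z) ⬝ᵥ (A₄ᵀ *ᵥ z)
      = z ⬝ᵥ z + (A₃ᵀ *ᵥ z) ⬝ᵥ (A₃ᵀ *ᵥ z) := by
    intro z
    rw [gram A₄ z, gram A₃ z, h', add_mulVec, one_mulVec, dotProduct_add]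
  -- surjectivity of A₄ᵀ
  have hinj : Function.Injective (Matrix.mulVecLin A₄ᵀ) := by
    refine (injective_iff_map_eq_zero _).mpr ?_
    intro z hz
    rw [Matrix.mulVecLin_apply] at hz
    have hk := key z
    rw [hz] at hk
    simp only [zero_dotProduct] at hk
    have h1 : (0:ℝ) ≤ z ⬝ᵥ z := dpnn z
    have h2 : (0:ℝ) ≤ (A₃ᵀ *ᵥ z) ⬝ᵥ (A₃ᵀ *ᵥ z) := dpnn _
    have : z ⬝ᵥ z = 0 := by linarith
    exact dotProduct_self_eq_zero.mp this
  have hsurj : ∀ w : Fin q → ℝ, ∃ z, A₄ᵀ *ᵥ z = w := by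
    intro w
    obtain ⟨z, hz⟩ := (LinearMap.injective_iff_surjective.mp hinj) w
    exact ⟨z, by rwa [Matrix.mulVecLin_apply] at hz⟩
  -- constants
  set T : ℝ := (∑ i, ∑ j, A₄ᵀ i j ^ 2) + 1 with hT
  have hT1 : (1:ℝ) ≤ T := by
    have : (0:ℝ) ≤ ∑ i, ∑ j, A₄ᵀ i j ^ 2 :=
      Finset.sum_nonneg fun i _ => Finset.sum_nonneg fun j _ => sq_nonneg _
    rw [hT]; linarith
  have hTpos : (0:ℝ) < T := lt_of_lt_of_le one_pos hT1
  have hsT : (0:ℝ) < Real.sqrt T := Real.sqrt_pos.mpr hTpos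
  set κ : ℝ := (1 - Real.exp (-2)) / (4 * Real.sqrt T) with hκ
  have hκpos : 0 < κ := by
    apply div_pos
    · have : Real.exp (-2) < 1 := Real.exp_lt_one_iff.mpr (by norm_num)
      linarith
    · linarith
  refine ⟨|C| * κ ^ (-a), ?_⟩
  intro y y' t hy hy' ht
  obtain ⟨z, hz⟩ := hsurj y'
  set s := Real.sinh t with hs
  set ch := Real.cosh t with hch
  have hspos : 0 < s := Real.sinh_pos_iff.mpr (by linarith)
  have hsch : s < ch := Real.sinh_lt_cosh t
  set v : Fin q → ℝ := A₃.mulVec (s • y) + A₄.mulVec (ch • y') with hv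
  set u : Fin p → ℝ := A₃ᵀ *ᵥ z with hu
  -- dot products as sums
  have hy1 : y ⬝ᵥ y = 1 := by
    simpa [dotProduct, pow_two] using hy
  have hy'1 : y' ⬝ᵥ y' = 1 := by
    simpa [dotProduct, pow_two] using hy'
  set r2 : ℝ := z ⬝ᵥ z with hr2
  have hr2nn : 0 ≤ r2 := dpnn z
  have hkeyz : (1:ℝ) = r2 + u ⬝ᵥ u := by
    have := key z
    rwa [hz, hy'1] at this
  have hunn : 0 ≤ u ⬝ᵥ u := dpnn u
  have hr2le : r2 ≤ 1 := by linarith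
  -- Frobenius lower bound on r2
  have hfrob : 1 ≤ T * r2 := by
    have hterm : ∀ i, (y' i) ^ 2 ≤ (∑ j, A₄ᵀ i j ^ 2) * r2 := by
      intro i
      have hcs := Finset.sum_mul_sq_le_sq_mul_sq Finset.univ (fun j => A₄ᵀ i j) z
      have hyi : y' i = ∑ j, A₄ᵀ i j * z j := by
        rw [← hz]; rfl
      rw [hyi]
      simpa [hr2, dotProduct, pow_two] using hcs
    have hsum : (1:ℝ) ≤ ∑ i, (∑ j, A₄ᵀ i j ^ 2) * r2 := by
      rw [← hy']
      exact Finset.sum_le_sum fun i _ => hterm i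
    rw [← Finset.sum_mul] at hsum
    have : (∑ i, ∑ j, A₄ᵀ i j ^ 2) * r2 ≤ T * r2 := by
      apply mul_le_mul_of_nonneg_right _ hr2nn
      rw [hT]; linarith
    linarith
  have hr2pos : 0 < r2 := by
    rcases lt_or_ge 0 r2 with h0 | h0
    · exact h0
    · exfalso; nlinarith
  -- Cauchy-Schwarz for y, u
  have hyu : -(1 - r2 / 2) ≤ y ⬝ᵥ u := by
    have hcs : (y ⬝ᵥ u) ^ 2 ≤ (y ⬝ᵥ y) * (u ⬝ᵥ u) := by
      simpa [dotProduct, pow_two] using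
        Finset.sum_mul_sq_le_sq_mul_sq Finset.univ y u
    rw [hy1, one_mul] at hcs
    have huu : u ⬝ᵥ u = 1 - r2 := by linarith
    rw [huu] at hcs
    nlinarith [sq_nonneg (y ⬝ᵥ u + (1 - r2/2)), sq_nonneg r2]
  -- lower bound on v ⬝ᵥ z
  have hvz : s * r2 / 2 ≤ v ⬝ᵥ z := by
    have e1 : (A₃ *ᵥ (s • y)) ⬝ᵥ z = s * (y ⬝ᵥ u) := by
      calc (A₃ *ᵥ (s • y)) ⬝ᵥ z = z ⬝ᵥ (A₃ *ᵥ (s • y)) := dotProduct_comm _ _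
        _ = (z ᵥ* A₃) ⬝ᵥ (s • y) := dotProduct_mulVec _ _ _
        _ = u ⬝ᵥ (s • y) := by rw [← mulVec_transpose A₃ z]
        _ = s * (y ⬝ᵥ u) := by
            rw [dotProduct_smul, dotProduct_comm, smul_eq_mul]
    have e2 : (A₄ *ᵥ (ch • y')) ⬝ᵥ z = ch := by
      calc (A₄ *ᵥ (ch • y')) ⬝ᵥ z = z ⬝ᵥ (A₄ *ᵥ (ch • y')) := dotProduct_comm _ _
        _ = (z ᵥ* A₄) ⬝ᵥ (ch • y') := dotProduct_mulVec _ _ _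
        _ = y' ⬝ᵥ (ch • y') := by rw [← mulVec_transpose A₄ z, hz]
        _ = ch := by rw [dotProduct_smul, smul_eq_mul, hy'1, mul_one]
    have : v ⬝ᵥ z = s * (y ⬝ᵥ u) + ch := by
      rw [hv, add_dotProduct, e1, e2]
    rw [this]
    nlinarith
  -- Cauchy-Schwarz for v, z gives lower bound on ∑ v i ^ 2
  set S : ℝ := ∑ i, v i ^ 2 with hS
  have hSnn : 0 ≤ S := Finset.sum_nonneg fun i _ => sq_nonneg _
  have hvzcs : (v ⬝ᵥ z) ^ 2 ≤ S * r2 := by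
    simpa [hS, hr2, dotProduct, pow_two] using
      Finset.sum_mul_sq_le_sq_mul_sq Finset.univ v z
  have hX : |F y y' t| ≤ C * Real.sqrt S ^ (-a) := by
    have hX0 := hF y y' t hy hy'
    rw [← hs, ← hch] at hX0
    rw [← hv] at hX0
    rwa [← hS] at hX0
  clear_value S v u r2 κ T
  clear hF hv hu
  have hSlb : s ^ 2 / (4 * T) ≤ S := by
    have h1 : (s * r2 / 2) ^ 2 ≤ S * r2 :=
      le_trans (pow_le_pow_left₀ (by positivity) hvz 2) hvzcs
    -- (s*r2/2)^2 = s^2 * r2^2/4 ≤ S * r2 ⇒ s^2 * r2 / 4 ≤ S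
    have h2 : s ^ 2 * r2 / 4 ≤ S := by
      have := mul_le_mul_of_nonneg_right h1 (le_of_lt (inv_pos.mpr hr2pos))
      rw [mul_inv_cancel_right₀ (ne_of_gt hr2pos)] at this
      calc s ^ 2 * r2 / 4 = (s * r2 / 2) ^ 2 * r2⁻¹ := by
            field_simp; ring
        _ ≤ S := this
    have hr2T : 1 ≤ r2 * T := by linarith [hfrob, mul_comm T r2]
    have h3 : s ^ 2 / (4 * T) ≤ s ^ 2 * r2 / 4 := by
      rw [div_le_div_iff₀ (by linarith : (0:ℝ) < 4 * T) (by norm_num : (0:ℝ) < 4)]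
      nlinarith [sq_nonneg s, hr2T]
    linarith
  -- lower bound on sqrt S
  have hL : κ * Real.exp t ≤ Real.sqrt S := by
    have hsinh : (1 - Real.exp (-2)) / 2 * Real.exp t ≤ s := by
      have hexp : Real.exp (-t) ≤ Real.exp (-2) * Real.exp t := by
        rw [← Real.exp_add]
        exact Real.exp_le_exp.mpr (by linarith)
      rw [hs, Real.sinh_eq]
      linarith
    have hLsq : (κ * Real.exp t) ^ 2 ≤ S := by
      have h1 : κ * Real.exp t ≤ s / (2 * Real.sqrt T) := by
        rw [hκ, div_mul_eq_mul_div, div_le_div_iff₀ (by positivity) (by positivity)]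
        have h2 : (1 - Real.exp (-2)) * Real.exp t * (2 * Real.sqrt T) ≤
            (2 * s) * (2 * Real.sqrt T) := by
          apply mul_le_mul_of_nonneg_right _ (by positivity)
          linarith
        calc (1 - Real.exp (-2)) * Real.exp t * (2 * Real.sqrt T)
            ≤ (2 * s) * (2 * Real.sqrt T) := h2
          _ = s * (4 * Real.sqrt T) := by ring
      have h2 : (s / (2 * Real.sqrt T)) ^ 2 = s ^ 2 / (4 * T) := by
        rw [div_pow]
        congr 1
        rw [mul_pow, Real.sq_sqrt (le_of_lt hTpos)]
        ring
      have h0 : 0 ≤ κ * Real.exp t := by positivity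
      calc (κ * Real.exp t) ^ 2 ≤ (s / (2 * Real.sqrt T)) ^ 2 := by
            apply pow_le_pow_left₀ h0 h1
        _ = s ^ 2 / (4 * T) := h2
        _ ≤ S := hSlb
    exact Real.le_sqrt_of_sq_le hLsq
  -- finish
  have hXnn : (0:ℝ) ≤ Real.sqrt S ^ (-a) := Real.rpow_nonneg (Real.sqrt_nonneg _) _
  have step1 : |F y y' t| ≤ |C| * Real.sqrt S ^ (-a) := by
    calc |F y y' t| ≤ C * Real.sqrt S ^ (-a) := hX
      _ ≤ |C| * Real.sqrt S ^ (-a) :=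
          mul_le_mul_of_nonneg_right (le_abs_self C) hXnn
  have step2 : Real.sqrt S ^ (-a) ≤ (κ * Real.exp t) ^ (-a) :=
    Real.rpow_le_rpow_of_nonpos (by positivity) hL (neg_nonpos.mpr (le_of_lt ha))
  have step3 : (κ * Real.exp t) ^ (-a) = κ ^ (-a) * Real.exp (-a * t) := by
    rw [Real.mul_rpow (le_of_lt hκpos) (le_of_lt (Real.exp_pos t)),
      ← Real.exp_mul]
    ring_nf
  calc |F y y' t| ≤ |C| * Real.sqrt S ^ (-a) := step1
    _ ≤ |C| * (κ * Real.exp t) ^ (-a) :=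
        mul_le_mul_of_nonneg_left step2 (abs_nonneg C)
    _ = |C| * κ ^ (-a) * Real.exp (-a * t) := by rw [step3]; ring
end

section
/- In ℂ^m (m = (p+q)/2, p+q even), the vector (−λ, 0, …, 0) − ρ is in the same orbit as (λ, 0, …, 0) + ρ under the Weyl group of type D_m (signed permutations with an even number of sign changes), where ρ = (m−1, m−2, …, 1, 0). -/
/-- In `ℂ^m` (here over `ℝ` coordinates), `(-λ,0,…,0) - ρ` is in the same
orbit as `(λ,0,…,0) + ρ` under the Weyl group of type `D_m` (signed permutations with an
even number of sign changes), where `ρ = (m-1, m-2, …, 1, 0)`. -/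
theorem stmt_18 (m : ℕ) (hm : 2 ≤ m) (lam : ℝ)
    (ρ x y : Fin m → ℝ)
    (hρ : ∀ i, ρ i = (m : ℝ) - 1 - i)
    (hx : ∀ i, x i = (if (i : ℕ) = 0 then lam else 0) + ρ i)
    (hy : ∀ i, y i = (if (i : ℕ) = 0 then -lam else 0) - ρ i) :
    ∃ (σ : Equiv.Perm (Fin m)) (ε : Fin m → ℝ),
      (∀ i, ε i = 1 ∨ ε i = -1) ∧ (∏ i, ε i) = 1 ∧ ∀ i, y i = ε i * x (σ i) := by
  obtain ⟨k, rfl⟩ : ∃ k, m = k + 1 := ⟨m - 1, by omega⟩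
  have hk : 1 ≤ k := by omega
  refine ⟨1, fun i => if (i : ℕ) = k then (-1 : ℝ) ^ k else -1, ?_, ?_, ?_⟩
  · intro i
    dsimp only
    split
    · rcases Nat.even_or_odd k with h | h
      · left; exact h.neg_one_pow
      · right; exact h.neg_one_pow
    · right; rfl
  · rw [Fin.prod_univ_castSucc]
    have h1 : ∀ i : Fin k, ((i.castSucc : Fin (k+1)) : ℕ) ≠ k := by
      intro i; simpa using i.isLt.ne
    rw [Finset.prod_congr rfl (fun i _ => if_neg (h1 i))]
    simp only [Finset.prod_const, Finset.card_univ, Fintype.card_fin, Fin.val_last, if_pos rfl, ← pow_add]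
    rw [if_true, ← pow_add]
    exact Even.neg_one_pow ⟨k, rfl⟩
  · intro i
    simp only [Equiv.Perm.one_apply]
    rcases eq_or_ne (i : ℕ) k with h | h
    · have h0 : (i : ℕ) ≠ 0 := by omega
      have hxl : x i = 0 := by
        rw [hx i, hρ i, if_neg h0, h]
        push_cast; ring
      have hyl : y i = 0 := by
        rw [hy i, hρ i, if_neg h0, h]
        push_cast; ring
      rw [hxl, hyl, mul_zero]
    · rw [if_neg h, hx i, hy i]
      split_ifs <;> ring
end

section
/- Let y' ∈ S^{p-1}, y'' ∈ S^{q-1} and let A₃ (q×p), A₄ (q×q) satisfy A₄A₄ᵀ − A₃A₃ᵀ = I, with eigenvalues λ₁ ≥ ⋯ ≥ λ_q ≥ 1 of A₄ᵀA₄ and μᵢ = λᵢ − 1 the nonzero eigenvalues of A₃ᵀA₃. Then |A₃y' + A₄y''| ≥ min_i(√λᵢ − √(λᵢ − 1)). -/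
/-!
Diagonalize `A₄A₄ᵀ = 1 + A₃A₃ᵀ` by an orthogonal change of coordinates; its eigenvalues `νᵢ`
lie in `[1, L]`, where `L` is the largest one. The rows of `A₄` and `A₃` are then orthogonal of
squared lengths `νᵢ` and `νᵢ - 1`, so `A₄y'' = (√νᵢ ξᵢ)ᵢ` and `A₃y' = (√(νᵢ - 1) ηᵢ)ᵢ` with
`|ξ| = 1` and `|η| ≤ 1`. For `c = √L - √(L - 1)` and `1 ≤ ν ≤ L` the quadratic form
`(√ν ξ + √(ν - 1) η)² - c (√L ξ² - √(L - 1) η²)` is positive semidefinite; summing over the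
coordinates gives `|A₃y' + A₄y''|² ≥ c (√L - √(L - 1)) = c²`. Finally `L` is a root of the
characteristic polynomial of `A₄ᵀA₄`, i.e. one of the `λⱼ`.
-/

open Matrix

theorem sqrt_sub_sqrt_sub_one_mul_le {ν L : ℝ} (hν : 1 ≤ ν) (hνL : ν ≤ L) (ξ η : ℝ) :
    (√L - √(L - 1)) * (√L * ξ ^ 2 - √(L - 1) * η ^ 2) ≤ (√ν * ξ + √(ν - 1) * η) ^ 2 := by
  have hab : √(ν - 1) ^ 2 = √ν ^ 2 - 1 := by
    rw [Real.sq_sqrt (by linarith), Real.sq_sqrt (by linarith)]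
  have hAM : √(L - 1) ^ 2 = √L ^ 2 - 1 := by
    rw [Real.sq_sqrt (by linarith), Real.sq_sqrt (by linarith)]
  have haA : √ν ≤ √L := Real.sqrt_le_sqrt hνL
  have hMA : √(L - 1) ≤ √L := Real.sqrt_le_sqrt (by linarith)
  have ha0 := Real.sqrt_nonneg ν
  have hb0 := Real.sqrt_nonneg (ν - 1)
  have hM0 := Real.sqrt_nonneg (L - 1)
  generalize √ν = a, √(ν - 1) = b, √L = A, √(L - 1) = M at *
  -- the quadratic form `P ξ² + 2ab ξη + R η²` in the difference is positive semidefinite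
  set P := a ^ 2 - (A - M) * A
  set R := b ^ 2 + (A - M) * M
  have hP : 0 ≤ P := by nlinarith
  have hdet : P * R - (a * b) ^ 2 = (A - M) ^ 2 * (A ^ 2 - a ^ 2) := by
    linear_combination (A * M - A ^ 2) * hab + (A ^ 2 - A * M) * hAM
  have hdet0 : (a * b) ^ 2 ≤ P * R := by
    nlinarith [mul_nonneg (sq_nonneg (A - M)) (sub_nonneg.2 (pow_le_pow_left₀ ha0 haA 2))]
  have key : 0 ≤ P * ξ ^ 2 + 2 * (a * b) * ξ * η + R * η ^ 2 := by
    rcases hP.eq_or_lt with hP0 | hP0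
    · have : a * b = 0 := by rw [← hP0] at hdet0; nlinarith
      rw [← hP0, this]; nlinarith
    · nlinarith [sq_nonneg (P * ξ + a * b * η), sq_nonneg η]
  nlinarith

theorem Polynomial.exists_eq_of_prod_X_sub_C_eq {R ι κ : Type*} [CommRing R] [IsDomain R]
    [Fintype ι] [Fintype κ] {f : ι → R} {g : κ → R}
    (h : ∏ i, (X - C (f i)) = ∏ j, (X - C (g j))) (i : ι) : ∃ j, f i = g j := by
  have hroot : eval (f i) (∏ j, (X - C (g j))) = 0 := by
    rw [← h, eval_prod]
    exact Finset.prod_eq_zero (Finset.mem_univ i) (by simp)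
  simpa [eval_prod, Finset.prod_eq_zero_iff, sub_eq_zero] using hroot

section Gram

variable {m n : Type*} [Fintype m]

theorem nonneg_of_mul_transpose_eq_diagonal [DecidableEq n] {d : n → ℝ} {M : Matrix n m ℝ}
    (hM : M * Mᵀ = diagonal d) (i : n) : 0 ≤ d i := by
  have hii := congrFun (congrFun hM i) i
  rw [diagonal_apply_eq, mul_apply] at hii
  rw [← hii]
  exact Finset.sum_nonneg fun j _ => mul_self_nonneg (M i j)

variable [Fintype n]

theorem dotProduct_mulVec_self (N : Matrix n m ℝ) (y : m → ℝ) :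
    N *ᵥ y ⬝ᵥ N *ᵥ y = Nᵀ *ᵥ (N *ᵥ y) ⬝ᵥ y := by
  rw [dotProduct_mulVec, ← mulVec_transpose]

theorem dotProduct_mulVec_self_of_mul_transpose_eq_one [DecidableEq n] {N : Matrix n n ℝ}
    (hN : N * Nᵀ = 1) (y : n → ℝ) : N *ᵥ y ⬝ᵥ N *ᵥ y = y ⬝ᵥ y := by
  rw [dotProduct_mulVec_self, mulVec_mulVec, mul_eq_one_comm.mp hN, one_mulVec]

variable [DecidableEq n] {d : n → ℝ}

theorem dotProduct_mulVec_self_le_of_mul_transpose_eq_diagonal {N : Matrix n m ℝ}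
    (hN : N * Nᵀ = diagonal d) (hd : ∀ i, d i ≤ 1) (y : m → ℝ) :
    N *ᵥ y ⬝ᵥ N *ᵥ y ≤ y ⬝ᵥ y := by
  set z := N *ᵥ y
  have hNz : Nᵀ *ᵥ z ⬝ᵥ Nᵀ *ᵥ z ≤ z ⬝ᵥ z := by
    rw [dotProduct_mulVec_self, transpose_transpose, mulVec_mulVec, hN]
    simp only [dotProduct, mulVec_diagonal]
    exact Finset.sum_le_sum fun i _ => by nlinarith [hd i, mul_self_nonneg (z i)]
  have hcs : (Nᵀ *ᵥ z ⬝ᵥ y) ^ 2 ≤ (Nᵀ *ᵥ z ⬝ᵥ Nᵀ *ᵥ z) * (y ⬝ᵥ y) := by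
    simpa only [dotProduct, sq] using Finset.sum_mul_sq_le_sq_mul_sq _ (Nᵀ *ᵥ z) y
  rw [← dotProduct_mulVec_self] at hcs
  have hz : 0 ≤ z ⬝ᵥ z := by simpa using dotProduct_self_star_nonneg z
  have hy : 0 ≤ y ⬝ᵥ y := by simpa using dotProduct_self_star_nonneg y
  nlinarith

theorem diagonal_sqrt_mul_diagonal_inv_sqrt_mul {M : Matrix n m ℝ} (hM : M * Mᵀ = diagonal d) :
    diagonal (fun i => √(d i)) * (diagonal (fun i => (√(d i))⁻¹) * M) = M := by
  ext i j
  simp only [diagonal_mul]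
  by_cases hd : d i = 0
  · have hrow : M i ⬝ᵥ M i = 0 := by
      have hii := congrFun (congrFun hM i) i
      rwa [diagonal_apply_eq, hd, mul_apply] at hii
    simp [dotProduct_self_eq_zero.mp hrow]
  · rw [mul_inv_cancel_left₀]
    exact Real.sqrt_ne_zero'.mpr ((nonneg_of_mul_transpose_eq_diagonal hM i).lt_of_ne' hd)

-- `d i / d i` is `1`, or `0` on the rows of `M` that vanish.
theorem diagonal_inv_sqrt_mul_mul_transpose {M : Matrix n m ℝ} (hM : M * Mᵀ = diagonal d) :
    (diagonal (fun i => (√(d i))⁻¹) * M) * (diagonal (fun i => (√(d i))⁻¹) * M)ᵀ =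
      diagonal (fun i => d i / d i) := by
  rw [transpose_mul, diagonal_transpose, Matrix.mul_assoc, ← Matrix.mul_assoc M, hM,
    diagonal_mul_diagonal, diagonal_mul_diagonal]
  congr 1
  ext i
  rw [mul_comm, mul_assoc, ← mul_inv,
    Real.mul_self_sqrt (nonneg_of_mul_transpose_eq_diagonal hM i), div_eq_mul_inv]

theorem sq_sqrt_sub_sqrt_sub_one_le_of_mul_transpose_eq_diagonal {A₃ : Matrix n m ℝ}
    {A₄ : Matrix n n ℝ} {ν : n → ℝ} {L : ℝ} (h₃ : A₃ * A₃ᵀ = diagonal (fun i => ν i - 1))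
    (h₄ : A₄ * A₄ᵀ = diagonal ν) (hνL : ∀ i, ν i ≤ L) {y' : m → ℝ} {y'' : n → ℝ}
    (hy' : y' ⬝ᵥ y' ≤ 1) (hy'' : y'' ⬝ᵥ y'' = 1) :
    (√L - √(L - 1)) ^ 2 ≤ (A₃ *ᵥ y' + A₄ *ᵥ y'') ⬝ᵥ (A₃ *ᵥ y' + A₄ *ᵥ y'') := by
  have hν : ∀ i, 1 ≤ ν i := fun i => sub_nonneg.mp (nonneg_of_mul_transpose_eq_diagonal h₃ i)
  set η := (diagonal (fun i => (√(ν i - 1))⁻¹) * A₃) *ᵥ y'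
  set ξ := (diagonal (fun i => (√(ν i))⁻¹) * A₄) *ᵥ y''
  have hη : η ⬝ᵥ η ≤ 1 := (dotProduct_mulVec_self_le_of_mul_transpose_eq_diagonal
    (diagonal_inv_sqrt_mul_mul_transpose h₃) (fun i => div_self_le_one _) y').trans hy'
  have hξ : ξ ⬝ᵥ ξ = 1 := by
    have hone : diagonal (fun i => ν i / ν i) = 1 := by
      rw [← diagonal_one]
      exact congrArg diagonal (funext fun i => div_self (by linarith [hν i]))
    rw [dotProduct_mulVec_self_of_mul_transpose_eq_one
      ((diagonal_inv_sqrt_mul_mul_transpose h₄).trans hone), hy'']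
  have hs : A₃ *ᵥ y' + A₄ *ᵥ y'' = fun i => √(ν i) * ξ i + √(ν i - 1) * η i := by
    conv_lhs => rw [← diagonal_sqrt_mul_diagonal_inv_sqrt_mul h₃,
      ← diagonal_sqrt_mul_diagonal_inv_sqrt_mul h₄]
    ext i
    simp only [← mulVec_mulVec, Pi.add_apply, mulVec_diagonal, ξ, η]
    ring
  have hc : 0 ≤ √L - √(L - 1) := sub_nonneg.mpr (Real.sqrt_le_sqrt (by linarith))
  calc (√L - √(L - 1)) ^ 2 = (√L - √(L - 1)) * (√L * (ξ ⬝ᵥ ξ) - √(L - 1) * 1) := by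
        rw [hξ]; ring
    _ ≤ (√L - √(L - 1)) * (√L * (ξ ⬝ᵥ ξ) - √(L - 1) * (η ⬝ᵥ η)) := by
        gcongr
    _ = ∑ i, (√L - √(L - 1)) * (√L * ξ i ^ 2 - √(L - 1) * η i ^ 2) := by
        simp only [dotProduct, Finset.mul_sum, ← Finset.sum_sub_distrib, sq]
    _ ≤ ∑ i, (√(ν i) * ξ i + √(ν i - 1) * η i) ^ 2 :=
        Finset.sum_le_sum fun i _ => sqrt_sub_sqrt_sub_one_mul_le (hν i) (hνL i) _ _
    _ = _ := by simp only [hs, dotProduct, sq]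

theorem Matrix.IsHermitian.exists_mul_transpose_eq_one_and_mul_mul_transpose_eq_diagonal
    {B : Matrix n n ℝ} (hB : B.IsHermitian) :
    ∃ P : Matrix n n ℝ, P * Pᵀ = 1 ∧ P * B * Pᵀ = diagonal hB.eigenvalues := by
  set U : Matrix n n ℝ := (hB.eigenvectorUnitary : Matrix n n ℝ)
  have hU : star U = Uᵀ := by rw [star_eq_conjTranspose, conjTranspose_eq_transpose_of_trivial]
  refine ⟨Uᵀ, ?_, ?_⟩
  · rw [transpose_transpose, ← hU, Unitary.coe_star_mul_self]
  · rw [transpose_transpose, ← hU]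
    simpa using hB.conjStarAlgAut_star_eigenvectorUnitary

theorem sq_sqrt_sub_sqrt_sub_one_le {A₃ : Matrix n m ℝ} {A₄ : Matrix n n ℝ}
    (h : A₄ * A₄ᵀ - A₃ * A₃ᵀ = 1) (hB : (A₄ * A₄ᵀ).IsHermitian) {L : ℝ}
    (hL : ∀ i, hB.eigenvalues i ≤ L) {y' : m → ℝ} {y'' : n → ℝ}
    (hy' : y' ⬝ᵥ y' ≤ 1) (hy'' : y'' ⬝ᵥ y'' = 1) :
    (√L - √(L - 1)) ^ 2 ≤ (A₃ *ᵥ y' + A₄ *ᵥ y'') ⬝ᵥ (A₃ *ᵥ y' + A₄ *ᵥ y'') := by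
  obtain ⟨P, hP, hPB⟩ := hB.exists_mul_transpose_eq_one_and_mul_mul_transpose_eq_diagonal
  have h₄ : (P * A₄) * (P * A₄)ᵀ = diagonal hB.eigenvalues := by
    rw [← hPB]; simp only [transpose_mul, Matrix.mul_assoc]
  have h₃ : (P * A₃) * (P * A₃)ᵀ = diagonal (fun i => hB.eigenvalues i - 1) := by
    have hA₃ : A₃ * A₃ᵀ = A₄ * A₄ᵀ - 1 := by rw [← h, sub_sub_cancel]
    calc (P * A₃) * (P * A₃)ᵀ = P * (A₃ * A₃ᵀ) * Pᵀ := by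
          simp only [transpose_mul, Matrix.mul_assoc]
      _ = diagonal hB.eigenvalues - 1 := by
          rw [hA₃, Matrix.mul_sub, Matrix.sub_mul, Matrix.mul_one, hPB, hP]
      _ = _ := by rw [← diagonal_one, diagonal_sub]
  have := sq_sqrt_sub_sqrt_sub_one_le_of_mul_transpose_eq_diagonal h₃ h₄ hL hy' hy''
  rwa [← mulVec_mulVec, ← mulVec_mulVec, ← mulVec_add,
    dotProduct_mulVec_self_of_mul_transpose_eq_one hP] at this

end Gram

theorem stmt_19_general (p q : ℕ) (hq : 0 < q)
    (A₃ : Matrix (Fin q) (Fin p) ℝ) (A₄ : Matrix (Fin q) (Fin q) ℝ)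
    (h : A₄ * A₄ᵀ - A₃ * A₃ᵀ = 1)
    (lam : Fin q → ℝ)
    (hchar : (A₄ᵀ * A₄).charpoly = ∏ i, (Polynomial.X - Polynomial.C (lam i)))
    (y' : Fin p → ℝ) (y'' : Fin q → ℝ)
    (hy' : ∑ i, y' i ^ 2 = 1) (hy'' : ∑ i, y'' i ^ 2 = 1) :
    Real.sqrt (∑ i, (A₃.mulVec y' + A₄.mulVec y'') i ^ 2) ≥
      ⨅ i : Fin q, (Real.sqrt (lam i) - Real.sqrt (lam i - 1)) := by
  have : Nonempty (Fin q) := ⟨⟨0, hq⟩⟩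
  have hB : (A₄ * A₄ᵀ).IsHermitian := by simpa using isHermitian_mul_conjTranspose_self A₄
  obtain ⟨i, hi⟩ := Finite.exists_max hB.eigenvalues
  obtain ⟨j, hj⟩ : ∃ j, hB.eigenvalues i = lam j := by
    refine Polynomial.exists_eq_of_prod_X_sub_C_eq ?_ i
    rw [← hchar, charpoly_mul_comm, hB.charpoly_eq]
    simp
  have key := sq_sqrt_sub_sqrt_sub_one_le h hB hi (y' := y') (y'' := y'')
    (by simpa [dotProduct, sq] using hy'.le) (by simpa [dotProduct, sq] using hy'')
  calc ⨅ k, (√(lam k) - √(lam k - 1)) ≤ √(lam j) - √(lam j - 1) :=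
        ciInf_le (Finite.bddBelow_range _) j
    _ ≤ _ := by
        rw [← hj]
        exact Real.le_sqrt_of_sq_le (by simpa [dotProduct, sq] using key)

/-- If `A₄A₄ᵀ - A₃A₃ᵀ = I` and `A₄ᵀA₄` has eigenvalues
`λ₁ ≥ ⋯ ≥ λ_q ≥ 1` (counted via the characteristic polynomial), then for all unit
vectors `y'`, `y''`, `|A₃y' + A₄y''| ≥ min_i (√λᵢ - √(λᵢ-1))`. -/
theorem stmt_19 (p q : ℕ) (hq : 0 < q)
    (A₃ : Matrix (Fin q) (Fin p) ℝ) (A₄ : Matrix (Fin q) (Fin q) ℝ)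
    (h : A₄ * A₄ᵀ - A₃ * A₃ᵀ = 1)
    (lam : Fin q → ℝ)
    (hmono : ∀ i j : Fin q, i ≤ j → lam j ≤ lam i)
    (hge : ∀ i, 1 ≤ lam i)
    (hchar : (A₄ᵀ * A₄).charpoly = ∏ i, (Polynomial.X - Polynomial.C (lam i)))
    (y' : Fin p → ℝ) (y'' : Fin q → ℝ)
    (hy' : ∑ i, y' i ^ 2 = 1) (hy'' : ∑ i, y'' i ^ 2 = 1) :
    Real.sqrt (∑ i, (A₃.mulVec y' + A₄.mulVec y'') i ^ 2) ≥
      ⨅ i : Fin q, (Real.sqrt (lam i) - Real.sqrt (lam i - 1)) :=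
  stmt_19_general p q hq A₃ A₄ h lam hchar y' y'' hy' hy''
end
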